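/- For k ≥ 3 and n ≥ 2k − 1, the smallest integer p such that (P_n)^p is k-ordered Hamiltonian is at least ⌊3k/2⌋ − 2. -/

import Mathlib

open Finset

section PathDist

variable {n : ℕ}

lemma pathWalk_length_ge {u v : Fin n} (w : (SimpleGraph.pathGraph n).Walk u v) :
    Nat.dist u.val v.val ≤ w.length := by
  induction w with
  | nil => simp [Nat.dist_self]
  | @cons x y z h q ih =>
    rw [SimpleGraph.pathGraph_adj] at h
    have h1 : Nat.dist x.val y.val = 1 := by
      rcases h with h | h <;> simp [Nat.dist] <;> omega
    calc Nat.dist x.val z.val ≤ Nat.dist x.val y.val + Nat.dist y.val z.val :=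
          Nat.dist.triangle_inequality _ _ _
      _ ≤ 1 + q.length := by omega
      _ = (SimpleGraph.Walk.cons ‹(SimpleGraph.pathGraph n).Adj x y› q).length := by
          simp [SimpleGraph.Walk.length_cons]; omega

lemma pathWalk_exists_aux :
    ∀ (d : ℕ) (u v : Fin n), v.val = u.val + d →
    ∃ w : (SimpleGraph.pathGraph n).Walk u v, w.length = d := by
  intro d
  induction d with
  | zero =>
    intro u v h
    have : u = v := Fin.ext (by omega)
    subst this
    exact ⟨SimpleGraph.Walk.nil, rfl⟩
  | succ d ih =>
    intro u v h
    have hu1 : u.val + 1 < n := by have := v.isLt; omega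
    obtain ⟨w, hw⟩ := ih ⟨u.val + 1, hu1⟩ v (by show v.val = u.val + 1 + d; omega)
    refine ⟨SimpleGraph.Walk.cons ?_ w, by rw [SimpleGraph.Walk.length_cons, hw]⟩
    rw [SimpleGraph.pathGraph_adj]
    left; rfl

lemma pathWalk_exists (u v : Fin n) :
    ∃ w : (SimpleGraph.pathGraph n).Walk u v, w.length = Nat.dist u.val v.val := by
  rcases le_total u.val v.val with h | h
  · obtain ⟨w, hw⟩ := pathWalk_exists_aux (v.val - u.val) u v (by omega)
    exact ⟨w, by simp [Nat.dist]; omega⟩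
  · obtain ⟨w, hw⟩ := pathWalk_exists_aux (u.val - v.val) v u (by omega)
    exact ⟨w.reverse, by simp [Nat.dist]; omega⟩

lemma pathGraph_dist (u v : Fin n) :
    (SimpleGraph.pathGraph n).dist u v = Nat.dist u.val v.val := by
  obtain ⟨w, hw⟩ := pathWalk_exists u v
  apply le_antisymm
  · exact hw ▸ SimpleGraph.dist_le w
  · obtain ⟨w', hw'⟩ := (SimpleGraph.Reachable.exists_walk_length_eq_dist ⟨w⟩)
    exact hw' ▸ pathWalk_length_ge w'

end PathDist

section Helpers2

lemma walk_support_eq_map {V : Type*} {G : SimpleGraph V} {u w : V} (q : G.Walk u w) :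
    q.support = (List.range (q.length + 1)).map q.getVert := by
  induction q with
  | nil => rfl
  | @cons x y z h q ih =>
    rw [SimpleGraph.Walk.support_cons, ih, SimpleGraph.Walk.length_cons,
      List.range_succ_eq_map (n := q.length + 1), List.map_cons, List.map_map]
    congr 1

lemma card_filter_comp {n : ℕ} (f : ℕ → Fin n)
    (hinj : ∀ i < n, ∀ j < n, f i = f j → i = j)
    (hsurj : ∀ x, ∃ i, i < n ∧ f i = x)
    (Q : Fin n → Prop) [DecidablePred Q] :
    ((Finset.range n).filter (fun i => Q (f i))).card = (Finset.univ.filter Q).card := by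
  apply Finset.card_bij (fun i _ => f i)
  · intro i hi
    simp only [Finset.mem_filter, Finset.mem_range] at hi
    simp [hi.2]
  · intro i hi j hj h
    simp only [Finset.mem_filter, Finset.mem_range] at hi hj
    exact hinj i hi.1 j hj.1 h
  · intro y hy
    simp only [Finset.mem_filter, Finset.mem_univ, true_and] at hy
    obtain ⟨i, hi, rfl⟩ := hsurj y
    exact ⟨i, by simp [hi, hy], rfl⟩

lemma card_filter_interval {n : ℕ} (lo hi : ℕ) (h : hi ≤ n) :
    (Finset.univ.filter (fun x : Fin n => lo ≤ x.val ∧ x.val < hi)).card = hi - lo := by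
  rw [← Nat.card_Ico lo hi]
  apply Finset.card_bij (fun x _ => x.val)
  · intro x hx
    simp only [Finset.mem_filter, Finset.mem_univ, true_and] at hx
    simp [Finset.mem_Ico]; omega
  · intro x _ y _ hxy
    exact Fin.ext hxy
  · intro y hy
    simp only [Finset.mem_Ico] at hy
    refine ⟨⟨y, by omega⟩, ?_, rfl⟩
    simp; omega

lemma iff_of_no_change (P : ℕ → Prop) (u : ℕ) :
    ∀ v, u ≤ v → (∀ i, u ≤ i → i < v → (P i ↔ P (i + 1))) → (P u ↔ P v) := by
  intro v
  induction v with
  | zero =>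
    intro h _
    have : u = 0 := by omega
    subst this; rfl
  | succ v ih =>
    intro huv hstep
    by_cases hc : u = v + 1
    · subst hc; rfl
    · have h1 : u ≤ v := by omega
      exact (ih h1 (fun i hi1 hi2 => hstep i hi1 (by omega))).trans (hstep v h1 (by omega))

lemma exists_change {P : ℕ → Prop} {u v : ℕ} (huv : u ≤ v) (h : ¬ (P u ↔ P v)) :
    ∃ i, u ≤ i ∧ i < v ∧ ¬ (P i ↔ P (i + 1)) := by
  by_contra hno
  push_neg at hno
  exact h (iff_of_no_change P u v huv (fun i h1 h2 => (hno i h1 h2)))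

end Helpers2




def SimpleGraph.power {V : Type*} (G : SimpleGraph V) (n : ℕ) : SimpleGraph V where
  Adj v w := 1 ≤ G.dist v w ∧ G.dist v w ≤ n
  symm := ⟨fun v w h => by rwa [SimpleGraph.dist_comm]⟩
  loopless := ⟨fun v h => by simp [SimpleGraph.dist_self] at h⟩

/-- A graph is Hamilton-connected if every pair of distinct vertices is joined
by a Hamiltonian path. -/
def SimpleGraph.IsHamiltonConnected {V : Type*} [DecidableEq V] (G : SimpleGraph V) : Prop :=
  ∀ v w : V, v ≠ w → ∃ p : G.Walk v w, p.IsHamiltonian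

/-- A graph is `k`-ordered if every sequence of `k` distinct vertices lies on a cycle
in the given cyclic order. -/
def SimpleGraph.IsKOrdered {V : Type*} (G : SimpleGraph V) (k : ℕ) : Prop :=
  ∀ v : Fin k → V, Function.Injective v →
    ∃ (a : V) (c : G.Walk a a), c.IsCycle ∧
      ∃ t : Fin k → ℕ, StrictMono t ∧ (∀ i, t i < c.length) ∧ ∀ i, c.getVert (t i) = v i

/-- A graph is `k`-ordered Hamiltonian if every sequence of `k` distinct vertices lies on a
Hamiltonian cycle in the given cyclic order. -/
def SimpleGraph.IsKOrderedHamiltonian {V : Type*} [DecidableEq V] (G : SimpleGraph V) (k : ℕ) :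
    Prop :=
  ∀ v : Fin k → V, Function.Injective v →
    ∃ (a : V) (c : G.Walk a a), c.IsHamiltonianCycle ∧
      ∃ t : Fin k → ℕ, StrictMono t ∧ (∀ i, t i < c.length) ∧ ∀ i, c.getVert (t i) = v i

theorem stmt_6 (k n : ℕ) (hk : 3 ≤ k) (hn : 2 * k - 1 ≤ n) (p : ℕ)
    (hp : ((SimpleGraph.pathGraph n).power p).IsKOrderedHamiltonian k) :
    3 * k / 2 - 2 ≤ p := by
  classical
  by_contra hnp
  push_neg at hnp
  -- arithmetic setup
  set b := k / 2 with hbdef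
  set a := k - k / 2 with hadef
  have hab : a + b = k := by omega
  have ha2 : 2 ≤ a := by omega
  have hb1 : 1 ≤ b := by omega
  have hba : b ≤ a := by omega
  have hba2 : a ≤ b + 1 := by omega
  have hpk : p + 3 ≤ k + b := by omega
  obtain ⟨g, hg1, hg2, hg3⟩ : ∃ g, 1 ≤ g ∧ p + 2 ≤ a + g ∧ g + 1 ≤ 2 * b := by
    refine ⟨max (p + 2 - a) 1, le_max_right _ _, ?_, ?_⟩
    · have := le_max_left (p + 2 - a) 1; omega
    · have h1 : p + 2 - a ≤ 2 * b - 1 := by omega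
      have h2 : (1 : ℕ) ≤ 2 * b - 1 := by omega
      have := max_le h1 h2
      omega
  set r := a + g with hrdef
  have hrn : r + b ≤ n := by omega
  have hkn : k ≤ n := by omega
  -- prescribed vertices
  have hvlt : ∀ j : Fin k, (if j.val % 2 = 0 then j.val / 2 else r + j.val / 2) < n := by
    intro j
    have := j.isLt
    split <;> omega
  set v : Fin k → Fin n :=
    fun j => ⟨if j.val % 2 = 0 then j.val / 2 else r + j.val / 2, hvlt j⟩ with hvdef
  have hveven : ∀ j : Fin k, j.val % 2 = 0 → (v j).val = j.val / 2 := by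
    intro j hj
    rw [hvdef]
    simp [hj]
  have hvodd : ∀ j : Fin k, j.val % 2 = 1 → (v j).val = r + j.val / 2 := by
    intro j hj
    rw [hvdef]
    simp [hj]
  have hvinj : Function.Injective v := by
    intro j j' hjj
    have h := congrArg Fin.val hjj
    rw [hvdef] at h
    simp only [] at h
    have hjk := j.isLt
    have hj'k := j'.isLt
    apply Fin.ext
    split at h <;> split at h <;> omega
  obtain ⟨x0, c, hc, t, htmono, htlt, hvt⟩ := hp v hvinj
  have hlen : c.length = n := by simpa using hc.length_eq
  set f : ℕ → Fin n := c.getVert with hfdef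
  have hadj : ∀ i, i < n →
      1 ≤ Nat.dist (f i).val (f (i + 1)).val ∧ Nat.dist (f i).val (f (i + 1)).val ≤ p := by
    intro i hi
    have h := c.adj_getVert_succ (by omega : i < c.length)
    have h2 : 1 ≤ (SimpleGraph.pathGraph n).dist (f i) (f (i + 1)) ∧
        (SimpleGraph.pathGraph n).dist (f i) (f (i + 1)) ≤ p := h
    rwa [pathGraph_dist] at h2
  have hdistdef : ∀ x y : ℕ, Nat.dist x y = x - y + (y - x) := fun _ _ => rfl
  -- support machinery
  have hcount : ∀ x, c.support.tail.count x = 1 :=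
    (SimpleGraph.Walk.isHamiltonianCycle_iff_isCycle_and_support_count_tail_eq_one.mp hc).2
  have htail : c.support.tail = (List.range n).map (fun i => f (i + 1)) := by
    rw [walk_support_eq_map c, List.range_succ_eq_map, List.map_cons, List.tail_cons,
      List.map_map, hlen]
    rfl
  have hnodup : c.support.tail.Nodup :=
    List.nodup_iff_count_le_one.mpr (fun x => le_of_eq (hcount x))
  have hsurj2 : ∀ x : Fin n, ∃ i, i < n ∧ f (i + 1) = x := by
    intro x
    have hx : x ∈ c.support.tail := by
      have := hcount x
      exact List.count_pos_iff.mp (by omega)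
    rw [htail] at hx
    simp only [List.mem_map, List.mem_range] at hx
    obtain ⟨i, hi, hfi⟩ := hx
    exact ⟨i, hi, hfi⟩
  have hinj2 : ∀ i, i < n → ∀ j, j < n → f (i + 1) = f (j + 1) → i = j := by
    intro i hi j hj hij
    have hd : ((List.range n).map (fun i => f (i + 1))).Nodup := htail ▸ hnodup
    exact List.inj_on_of_nodup_map hd (List.mem_range.mpr hi) (List.mem_range.mpr hj) hij
  have hn5 : 5 ≤ n := by omega
  have hfn0 : f n = f 0 := by
    have h1 : c.getVert c.length = x0 := c.getVert_length
    rw [hlen] at h1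
    have h2 : f 0 = x0 := c.getVert_zero
    rw [hfdef]
    rw [h1]
    exact h2.symm
  have hinj1 : ∀ i, i < n → ∀ j, j < n → f i = f j → i = j := by
    intro i hi j hj hij
    by_cases h0i : i = 0 <;> by_cases h0j : j = 0
    · omega
    · exfalso
      subst h0i
      have e1 : f (n - 1 + 1) = f (j - 1 + 1) := by
        rw [show n - 1 + 1 = n by omega, show j - 1 + 1 = j by omega, hfn0]
        exact hij
      have := hinj2 (n - 1) (by omega) (j - 1) (by omega) e1
      omega
    · exfalso
      subst h0j
      have e1 : f (n - 1 + 1) = f (i - 1 + 1) := by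
        rw [show n - 1 + 1 = n by omega, show i - 1 + 1 = i by omega, hfn0]
        exact hij.symm
      have := hinj2 (n - 1) (by omega) (i - 1) (by omega) e1
      omega
    · have e1 : f (i - 1 + 1) = f (j - 1 + 1) := by
        rw [show i - 1 + 1 = i by omega, show j - 1 + 1 = j by omega]
        exact hij
      have := hinj2 (i - 1) (by omega) (j - 1) (by omega) e1
      omega
  have hsurj1 : ∀ x : Fin n, ∃ i, i < n ∧ f i = x := by
    intro x
    obtain ⟨i, hi, hfi⟩ := hsurj2 x
    by_cases h : i + 1 = n
    · refine ⟨0, by omega, ?_⟩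
      have h2 : f (i + 1) = f 0 := by rw [h]; exact hfn0
      rw [← h2]
      exact hfi
    · exact ⟨i + 1, by omega, hfi⟩
  -- positions
  have htlt' : ∀ j : Fin k, t j < n := fun j => hlen ▸ htlt j
  have hpos : ∀ i, i < n → ∀ j : Fin k, f i = v j → i = t j := by
    intro i hi j hfi
    exact hinj1 i hi (t j) (htlt' j) (by rw [hfi]; exact (hvt j).symm)
  have hconsec : ∀ i, i < n → ∀ j1 j2 : Fin k, f i = v j1 → f (i + 1) = v j2 →
      (j1.val + 1 = j2.val ∨ (j1.val = k - 1 ∧ j2.val = 0)) := by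
    intro i hi j1 j2 h1 h2
    have hi1 : i = t j1 := hpos i hi j1 h1
    have hj1k := j1.isLt
    have hj2k := j2.isLt
    by_cases hin : i + 1 < n
    · have hi2 : i + 1 = t j2 := hpos (i + 1) hin j2 h2
      have hlt : j1 < j2 := by
        rcases lt_trichotomy j1 j2 with h | h | h
        · exact h
        · exfalso; rw [h] at hi1; omega
        · exfalso; have := htmono h; omega
      left
      by_contra hne
      have hmid : j1.val + 1 < j2.val := by
        have : j1.val < j2.val := hlt
        omega
      have hm1 := htmono (show j1 < (⟨j1.val + 1, by omega⟩ : Fin k) from by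
        simp [Fin.lt_def])
      have hm2 := htmono (show (⟨j1.val + 1, by omega⟩ : Fin k) < j2 from by
        simp only [Fin.lt_def]; omega)
      omega
    · have hieq : i + 1 = n := by omega
      have h0 : f 0 = v j2 := by
        have h2' : f (i + 1) = f 0 := by rw [hieq]; exact hfn0
        rw [← h2']; exact h2
      have hj2 : (0 : ℕ) = t j2 := hpos 0 (by omega) j2 h0
      have hj2v : j2.val = 0 := by
        by_contra hne
        have hlt0 : (⟨0, by omega⟩ : Fin k) < j2 := by simp only [Fin.lt_def]; omega
        have := htmono hlt0
        omega
      right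
      refine ⟨?_, hj2v⟩
      by_contra hne
      have hlt1 : j1 < (⟨j1.val + 1, by omega⟩ : Fin k) := by simp [Fin.lt_def]
      have hm1 := htmono hlt1
      have hm2 := htlt' ⟨j1.val + 1, by omega⟩
      omega
  have hkey : ∀ i, i < n → ∀ j1 j2 : Fin k, f i = v j1 → f (i + 1) = v j2 →
      ((f i).val = a - 1 ∧ (f (i + 1)).val = 0 ∧ a = b + 1) := by
    intro i hi j1 j2 h1 h2
    obtain ⟨hd1, hd⟩ := hadj i hi
    have hdd := hdistdef (f i).val (f (i + 1)).val
    have hj1k := j1.isLt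
    have hj2k := j2.isLt
    rcases hconsec i hi j1 j2 h1 h2 with hcc | ⟨hw1, hw2⟩
    · rcases Nat.even_or_odd j1.val with hpar | hpar
      · have hpar' : j1.val % 2 = 0 := Nat.even_iff.mp hpar
        have e1 : (f i).val = j1.val / 2 := by rw [h1]; exact hveven j1 hpar'
        have e2 : (f (i + 1)).val = r + j2.val / 2 := by
          rw [h2]; exact hvodd j2 (by omega)
        exfalso; omega
      · have hpar' : j1.val % 2 = 1 := Nat.odd_iff.mp hpar
        have e1 : (f i).val = r + j1.val / 2 := by rw [h1]; exact hvodd j1 hpar'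
        have e2 : (f (i + 1)).val = j2.val / 2 := by
          rw [h2]; exact hveven j2 (by omega)
        exfalso; omega
    · have e2 : (f (i + 1)).val = j2.val / 2 := by
        rw [h2]; exact hveven j2 (by omega)
      by_cases hke : k % 2 = 0
      · have e1 : (f i).val = r + j1.val / 2 := by
          rw [h1]; exact hvodd j1 (by omega)
        exfalso; omega
      · have e1 : (f i).val = j1.val / 2 := by
          rw [h1]; exact hveven j1 (by omega)
        refine ⟨by omega, by omega, by omega⟩
  have hprescA : ∀ x : Fin n, x.val < a → ∃ j : Fin k, v j = x := by
    intro x hx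
    refine ⟨⟨2 * x.val, by omega⟩, Fin.ext ?_⟩
    rw [hveven _ (by show (2 * x.val) % 2 = 0; omega)]
    show (2 * x.val) / 2 = x.val
    omega
  have hprescB : ∀ x : Fin n, r ≤ x.val → x.val < r + b → ∃ j : Fin k, v j = x := by
    intro x hx1 hx2
    refine ⟨⟨2 * (x.val - r) + 1, by omega⟩, Fin.ext ?_⟩
    rw [hvodd _ (by show (2 * (x.val - r) + 1) % 2 = 1; omega)]
    show r + (2 * (x.val - r) + 1) / 2 = x.val
    omega
  have hAR : ∀ i, i < n → (f i).val < a → r ≤ (f (i + 1)).val → False := by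
    intro i hi h1 h2
    obtain ⟨_, hd⟩ := hadj i hi
    have hdd := hdistdef (f i).val (f (i + 1)).val
    by_cases hb2 : (f (i + 1)).val < r + b
    · obtain ⟨j1, hj1⟩ := hprescA _ h1
      obtain ⟨j2, hj2⟩ := hprescB _ h2 hb2
      obtain ⟨k1, k2, k3⟩ := hkey i hi j1 j2 hj1.symm hj2.symm
      omega
    · omega
  have hRA : ∀ i, i < n → r ≤ (f i).val → (f (i + 1)).val < a → False := by
    intro i hi h1 h2
    obtain ⟨_, hd⟩ := hadj i hi
    have hdd := hdistdef (f i).val (f (i + 1)).val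
    by_cases hb2 : (f i).val < r + b
    · obtain ⟨j1, hj1⟩ := hprescB _ h1 hb2
      obtain ⟨j2, hj2⟩ := hprescA _ h2
      obtain ⟨k1, k2, k3⟩ := hkey i hi j1 j2 hj1.symm hj2.symm
      omega
    · omega
  -- counting sets
  set S1 := (Finset.range n).filter
    (fun i => (f i).val < a ∧ a ≤ (f (i + 1)).val ∧ (f (i + 1)).val < r) with hS1def
  set S2 := (Finset.range n).filter
    (fun i => a ≤ (f i).val ∧ (f i).val < r ∧ (f (i + 1)).val < a) with hS2def
  set CR := (Finset.range n).filter
    (fun i => ¬ (((f i).val < r) ↔ ((f (i + 1)).val < r))) with hCRdef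
  set U1 := (Finset.range n).filter
    (fun i => a ≤ (f i).val ∧ (f i).val < r) with hU1def
  set U2 := (Finset.range n).filter
    (fun i => a ≤ (f (i + 1)).val ∧ (f (i + 1)).val < r) with hU2def
  set AA := (Finset.range n).filter
    (fun i => (f i).val < a ∧ (f (i + 1)).val < a) with hAAdef
  set A1 := (Finset.range n).filter (fun i => (f i).val < a) with hA1def
  set A2 := (Finset.range n).filter (fun i => (f (i + 1)).val < a) with hA2def
  -- cardinalities via bijections
  have hA1card : A1.card = a := by
    rw [hA1def, card_filter_comp f hinj1 hsurj1 (fun x => x.val < a)]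
    have he : (Finset.univ.filter (fun x : Fin n => x.val < a)) =
        (Finset.univ.filter (fun x : Fin n => 0 ≤ x.val ∧ x.val < a)) := by
      apply Finset.filter_congr
      intro x _
      simp
    rw [he, card_filter_interval 0 a (by omega)]
    omega
  have hA2card : A2.card = a := by
    rw [hA2def, card_filter_comp (fun i => f (i + 1))
      (fun i hi j hj => hinj2 i hi j hj) (fun x => hsurj2 x) (fun x => x.val < a)]
    have he : (Finset.univ.filter (fun x : Fin n => x.val < a)) =
        (Finset.univ.filter (fun x : Fin n => 0 ≤ x.val ∧ x.val < a)) := by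
      apply Finset.filter_congr
      intro x _
      simp
    rw [he, card_filter_interval 0 a (by omega)]
    omega
  have hU1card : U1.card = g := by
    rw [hU1def, card_filter_comp f hinj1 hsurj1 (fun x => a ≤ x.val ∧ x.val < r),
      card_filter_interval a r (by omega)]
    omega
  have hU2card : U2.card = g := by
    rw [hU2def, card_filter_comp (fun i => f (i + 1))
      (fun i hi j hj => hinj2 i hi j hj) (fun x => hsurj2 x)
      (fun x => a ≤ x.val ∧ x.val < r),
      card_filter_interval a r (by omega)]
    omega
  -- AA is small
  have hAAcard : AA.card ≤ a - b := by
    rcases Finset.eq_empty_or_nonempty AA with he | ⟨i0, hi0⟩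
    · simp [he]
    · have hstruct : ∀ i ∈ AA, (f i).val = a - 1 ∧ a = b + 1 := by
        intro i hi
        rw [hAAdef, Finset.mem_filter, Finset.mem_range] at hi
        obtain ⟨hin, hfa1, hfa2⟩ := hi
        obtain ⟨j1, hj1⟩ := hprescA _ hfa1
        obtain ⟨j2, hj2⟩ := hprescA _ hfa2
        obtain ⟨k1, _, k3⟩ := hkey i hin j1 j2 hj1.symm hj2.symm
        exact ⟨k1, k3⟩
      have hab1 : a = b + 1 := (hstruct i0 hi0).2
      have hcard1 : AA.card ≤ 1 := by
        rw [Finset.card_le_one]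
        intro i hi j hj
        have e1 := (hstruct i hi).1
        have e2 := (hstruct j hj).1
        rw [hAAdef, Finset.mem_filter, Finset.mem_range] at hi hj
        exact hinj1 i hi.1 j hj.1 (Fin.ext (by omega))
      omega
  -- subsets
  have hsubA1 : A1 ⊆ S1 ∪ AA := by
    intro i hi
    rw [hA1def, Finset.mem_filter, Finset.mem_range] at hi
    obtain ⟨hin, hia⟩ := hi
    rw [Finset.mem_union, hS1def, hAAdef, Finset.mem_filter, Finset.mem_filter,
      Finset.mem_range]
    by_cases h2 : (f (i + 1)).val < a
    · right; exact ⟨hin, hia, h2⟩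
    · by_cases h3 : (f (i + 1)).val < r
      · left; exact ⟨hin, hia, by omega, h3⟩
      · exact (hAR i hin hia (by omega)).elim
  have hsubA2 : A2 ⊆ S2 ∪ AA := by
    intro i hi
    rw [hA2def, Finset.mem_filter, Finset.mem_range] at hi
    obtain ⟨hin, hia⟩ := hi
    rw [Finset.mem_union, hS2def, hAAdef, Finset.mem_filter, Finset.mem_filter,
      Finset.mem_range]
    by_cases h2 : (f i).val < a
    · right; exact ⟨hin, h2, hia⟩
    · by_cases h3 : (f i).val < r
      · left; exact ⟨hin, by omega, h3, hia⟩
      · exact (hRA i hin (by omega) hia).elim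
  have hS1card : b ≤ S1.card := by
    have h1 := Finset.card_le_card hsubA1
    have h2 := Finset.card_union_le S1 AA
    omega
  have hS2card : b ≤ S2.card := by
    have h1 := Finset.card_le_card hsubA2
    have h2 := Finset.card_union_le S2 AA
    omega
  -- parity of prescribed positions
  have hPt : ∀ j : Fin k, ((f (t j)).val < r) ↔ (j.val % 2 = 0) := by
    intro j
    have hjk := j.isLt
    rcases Nat.even_or_odd j.val with hpar | hpar
    · have hpar' := Nat.even_iff.mp hpar
      rw [hvt j, hveven j hpar']
      constructor
      · intro _; exact hpar'
      · intro _; omega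
    · have hpar' := Nat.odd_iff.mp hpar
      rw [hvt j, hvodd j hpar']
      constructor
      · intro h; omega
      · intro h; omega
  have hmle : ∀ (u w : Fin k), u.val ≤ w.val → t u ≤ t w := by
    intro u w h
    exact htmono.monotone (by rw [Fin.le_def]; exact h)
  have hchg : ∀ (j1 j2 : Fin k), j1.val + 1 = j2.val →
      ∃ i, i ∈ CR ∧ t j1 ≤ i ∧ i < t j2 := by
    intro j1 j2 hj12
    have hlt : j1 < j2 := by rw [Fin.lt_def]; omega
    have hmt := htmono hlt
    have hne : ¬ (((f (t j1)).val < r) ↔ ((f (t j2)).val < r)) := by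
      rw [hPt, hPt]
      omega
    obtain ⟨i, hi1, hi2, hi3⟩ :=
      exists_change (P := fun i => (f i).val < r) (le_of_lt hmt) hne
    refine ⟨i, ?_, hi1, hi2⟩
    rw [hCRdef, Finset.mem_filter, Finset.mem_range]
    have := htlt' j2
    exact ⟨by omega, hi3⟩
  have hwrap : ∀ (jl j0 : Fin k), jl.val = k - 1 → j0.val = 0 → k % 2 = 0 →
      ∃ i, i ∈ CR ∧ (t jl ≤ i ∨ i < t j0) := by
    intro jl j0 hjl hj0 hke
    by_contra hno
    push_neg at hno
    have hc1 : ((f (t jl)).val < r) ↔ ((f n).val < r) := by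
      apply iff_of_no_change (fun i => (f i).val < r) _ _ (le_of_lt (htlt' _))
      intro i h1 h2
      by_contra hcc
      have hmem : i ∈ CR := by
        rw [hCRdef, Finset.mem_filter, Finset.mem_range]
        exact ⟨h2, hcc⟩
      have := hno i hmem
      omega
    have hc2 : ((f 0).val < r) ↔ ((f (t j0)).val < r) := by
      apply iff_of_no_change (fun i => (f i).val < r) _ _ (Nat.zero_le _)
      intro i h1 h2
      by_contra hcc
      have hin : i < n := by
        have := htlt' j0
        omega
      have hmem : i ∈ CR := by
        rw [hCRdef, Finset.mem_filter, Finset.mem_range]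
        exact ⟨hin, hcc⟩
      have := hno i hmem
      omega
    have p1 := hPt jl
    have p2 := hPt j0
    rw [hfn0] at hc1
    omega
  -- crossing count
  have hCRcard : 2 * b ≤ CR.card := by
    have h2bk : 2 * b ≤ k := by omega
    have hex : ∀ jj : ℕ, jj < 2 * b →
        ∃ i, i ∈ CR ∧
          ((jj + 1 < k ∧ ∀ (j1 j2 : Fin k), j1.val = jj → j2.val = jj + 1 →
              (t j1 ≤ i ∧ i < t j2))
            ∨ (jj + 1 = k ∧ ∀ (jl j0 : Fin k), jl.val = k - 1 → j0.val = 0 →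
              (t jl ≤ i ∨ i < t j0))) := by
      intro jj hjj
      by_cases hcase : jj + 1 < k
      · have hjjk : jj < k := by omega
        obtain ⟨i, hi, h1, h2⟩ := hchg ⟨jj, hjjk⟩ ⟨jj + 1, hcase⟩ rfl
        refine ⟨i, hi, Or.inl ⟨hcase, ?_⟩⟩
        intro j1 j2 e1 e2
        have hj1 : j1 = ⟨jj, hjjk⟩ := Fin.ext e1
        have hj2 : j2 = ⟨jj + 1, hcase⟩ := Fin.ext e2
        subst hj1
        subst hj2
        exact ⟨h1, h2⟩
      · have hk2 : jj + 1 = k := by omega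
        have hke : k % 2 = 0 := by omega
        have hk1k : k - 1 < k := by omega
        have h0k : 0 < k := by omega
        obtain ⟨i, hi, hor⟩ := hwrap ⟨k - 1, hk1k⟩ ⟨0, h0k⟩ rfl rfl hke
        refine ⟨i, hi, Or.inr ⟨hk2, ?_⟩⟩
        intro jl j0 e1 e2
        have hjl : jl = ⟨k - 1, hk1k⟩ := Fin.ext e1
        have hj0 : j0 = ⟨0, h0k⟩ := Fin.ext e2
        subst hjl
        subst hj0
        exact hor
    choose φ hφ using hex
    have hdistinct : ∀ x y (hx : x < 2 * b) (hy : y < 2 * b), x < y →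
        φ x hx ≠ φ y hy := by
      intro x y hx hy hxy
      have hxk : x < k := by omega
      have hx1k : x + 1 < k := by omega
      have hyk : y < k := by omega
      rcases (hφ x hx).2 with ⟨_, Hx⟩ | ⟨hc, _⟩
      swap
      · omega
      obtain ⟨e1, e2⟩ := Hx ⟨x, hxk⟩ ⟨x + 1, hx1k⟩ rfl rfl
      rcases (hφ y hy).2 with ⟨hy1k, Hy⟩ | ⟨hyk1, Hy⟩
      · obtain ⟨e3, _⟩ := Hy ⟨y, hyk⟩ ⟨y + 1, hy1k⟩ rfl rfl
        have hmono1 : t ⟨x + 1, hx1k⟩ ≤ t ⟨y, hyk⟩ := hmle _ _ (by show x + 1 ≤ y; omega)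
        omega
      · have e3 := Hy ⟨k - 1, by omega⟩ ⟨0, by omega⟩ rfl rfl
        have hm1 : t ⟨x + 1, hx1k⟩ ≤ t (⟨k - 1, by omega⟩ : Fin k) :=
          hmle _ _ (by show x + 1 ≤ k - 1; omega)
        have hm2 : t (⟨0, by omega⟩ : Fin k) ≤ t ⟨x, hxk⟩ :=
          hmle _ _ (by show (0 : ℕ) ≤ x; omega)
        rcases e3 with e3 | e3 <;> omega
    have hmaps : ∀ jj ∈ Finset.range (2 * b),
        (fun jj => if h : jj < 2 * b then φ jj h else 0) jj ∈ CR := by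
      intro jj hjj
      rw [Finset.mem_range] at hjj
      simp only [dif_pos hjj]
      exact (hφ jj hjj).1
    have hinj : Set.InjOn (fun jj => if h : jj < 2 * b then φ jj h else 0)
        (Finset.range (2 * b)) := by
      intro x hx y hy hxy
      simp only [Finset.coe_range, Set.mem_Iio] at hx hy
      simp only [dif_pos hx, dif_pos hy] at hxy
      rcases lt_trichotomy x y with h | h | h
      · exact absurd hxy (hdistinct x y hx hy h)
      · exact h
      · exact absurd hxy.symm (hdistinct y x hy hx h)
    have := Finset.card_le_card_of_injOn _ hmaps hinj
    rwa [Finset.card_range] at this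
  -- disjointness and final count
  have hdisj12 : Disjoint S1 S2 := by
    rw [Finset.disjoint_left]
    intro i h1 h2
    rw [hS1def, Finset.mem_filter] at h1
    rw [hS2def, Finset.mem_filter] at h2
    omega
  have hdisj3 : Disjoint (S1 ∪ S2) CR := by
    rw [Finset.disjoint_left]
    intro i h1 h2
    rw [Finset.mem_union, hS1def, hS2def, Finset.mem_filter, Finset.mem_filter] at h1
    rw [hCRdef, Finset.mem_filter] at h2
    rcases h1 with h1 | h1 <;> omega
  have hsubU : S1 ∪ S2 ∪ CR ⊆ U1 ∪ U2 := by
    intro i hi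
    simp only [hS1def, hS2def, hCRdef, Finset.mem_union, Finset.mem_filter,
      Finset.mem_range] at hi
    simp only [hU1def, hU2def, Finset.mem_union, Finset.mem_filter, Finset.mem_range]
    rcases hi with (h | h) | h
    · right; exact ⟨h.1, by omega, h.2.2.2⟩
    · left; exact ⟨h.1, h.2.1, h.2.2.1⟩
    · obtain ⟨hin, hcc⟩ := h
      by_cases h1 : (f i).val < r
      · left
        refine ⟨hin, ?_, h1⟩
        by_contra hlow
        exact hAR i hin (by omega) (by omega)
      · right
        have h2 : (f (i + 1)).val < r := by omega
        refine ⟨hin, ?_, h2⟩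
        by_contra hlow
        exact hRA i hin (by omega) (by omega)
  have hunion : (S1 ∪ S2 ∪ CR).card = S1.card + S2.card + CR.card := by
    rw [Finset.card_union_of_disjoint hdisj3, Finset.card_union_of_disjoint hdisj12]
  have hle1 := Finset.card_le_card hsubU
  have hle2 := Finset.card_union_le U1 U2
  omega
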